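/- arXiv:1808.09855 — 6 statements merged into one kernel-verified Lean document; each statement's English description precedes it below -/
import Mathlib

section
/- Legendre dual representation of the limit shape: for (θ,χ) in the curved part, the limiting height function 𝔥(θ,χ) = θ𝔴° − ∫₀^χ ξ(u)𝔴°/(ξ(u)−𝔴°)² du, where 𝔴° = 𝔴°(θ,χ) is the critical point, equals the maximum over v ∈ [0, W°) of the function v ↦ θv − ∫₀^χ v·ξ(u)/(ξ(u)−v)² du. -/
/-!
For `x > 0` the kernel `φₓ(v) = v x / (x - v)²` is strictly convex on `[0, x)`, with
`φₓ'(w) = x (x + w) / (x - w)³`: its tangent-line gap `φₓ(v) - φₓ(w) - (v - w) φₓ'(w)` equals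
`x (v - w)² (2x² - vx - vw) / ((x - v)² (x - w)³)`. Integrating this gap with `x = ξ(u)`,
`w = 𝔴°`, the critical-point equation `∫ φ'_{ξ(u)}(𝔴°) du = θ` cancels the linear terms and
leaves `Φ(𝔴°) - Φ(v) = ∫ gap ≥ 0` (`Φ` is `legendreObjective`), with equality only for `v = 𝔴°`.
-/

open MeasureTheory Set

lemma kernel_tangent_lt_of_ne {x v w : ℝ} (hv : 0 ≤ v) (hvx : v < x) (hwx : w < x)
    (hne : v ≠ w) :
    w * x / (x - w) ^ 2 + (v - w) * (x * (x + w) / (x - w) ^ 3) < v * x / (x - v) ^ 2 := by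
  have hxv : 0 < x - v := sub_pos.mpr hvx
  have hxw : 0 < x - w := sub_pos.mpr hwx
  have hgap : v * x / (x - v) ^ 2 - (w * x / (x - w) ^ 2 + (v - w) * (x * (x + w) / (x - w) ^ 3))
      = x * (v - w) ^ 2 * (2 * x ^ 2 - v * x - v * w) / ((x - v) ^ 2 * (x - w) ^ 3) := by
    field_simp
    ring
  have hx : 0 < x := hv.trans_lt hvx
  have hfactor : 0 < 2 * x ^ 2 - v * x - v * w := by nlinarith
  have hsq : 0 < (v - w) ^ 2 := sq_pos_of_ne_zero (sub_ne_zero.mpr hne)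
  have : 0 < x * (v - w) ^ 2 * (2 * x ^ 2 - v * x - v * w) / ((x - v) ^ 2 * (x - w) ^ 3) := by
    positivity
  linarith

lemma kernel_tangent_le {x v w : ℝ} (hv : 0 ≤ v) (hvx : v < x) (hwx : w < x) :
    w * x / (x - w) ^ 2 + (v - w) * (x * (x + w) / (x - w) ^ 3) ≤ v * x / (x - v) ^ 2 := by
  rcases eq_or_ne v w with rfl | hne
  · simp
  · exact (kernel_tangent_lt_of_ne hv hvx hwx hne).le

lemma integrable_comp_of_continuousOn_Icc {α : Type*} [MeasurableSpace α] {μ : Measure α}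
    [IsFiniteMeasure μ] {ξ : α → ℝ} {g : ℝ → ℝ} {a b : ℝ} (hg : Measurable g)
    (hgc : ContinuousOn g (Icc a b)) (hξ : Measurable ξ) (hξab : ∀ᵐ u ∂μ, ξ u ∈ Icc a b) :
    Integrable (fun u => g (ξ u)) μ := by
  obtain ⟨C, hC⟩ := isCompact_Icc.exists_bound_of_continuousOn hgc
  exact .of_bound (hg.comp hξ).aestronglyMeasurable C (hξab.mono fun u hu => hC _ hu)

lemma continuousOn_div_sub_pow {p : ℝ → ℝ} (hp : Continuous p) {w W M : ℝ} (hw : w < W) (n : ℕ) :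
    ContinuousOn (fun x => p x / (x - w) ^ n) (Icc W M) :=
  hp.continuousOn.div (by fun_prop) fun x hx => pow_ne_zero _ (sub_pos.mpr (hw.trans_le hx.1)).ne'

noncomputable def legendreObjective {α : Type*} [MeasurableSpace α] (μ : Measure α) (ξ : α → ℝ)
    (θ v : ℝ) : ℝ :=
  θ * v - ∫ u, v * ξ u / (ξ u - v) ^ 2 ∂μ

section TangentGap

variable {α : Type*} [MeasurableSpace α] {μ : Measure α} {ξ : α → ℝ} {W M θ v w : ℝ}

lemma tangent_gap_nonneg_ae (hξWM : ∀ᵐ u ∂μ, ξ u ∈ Icc W M) (hv : v ∈ Ico 0 W) (hw : w < W) :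
    ∀ᵐ u ∂μ, 0 ≤ v * ξ u / (ξ u - v) ^ 2 -
      (w * ξ u / (ξ u - w) ^ 2 + (v - w) * (ξ u * (ξ u + w) / (ξ u - w) ^ 3)) :=
  hξWM.mono fun _ hu =>
    sub_nonneg.mpr (kernel_tangent_le hv.1 (hv.2.trans_le hu.1) (hw.trans_le hu.1))

variable [IsFiniteMeasure μ]

lemma integrable_kernel (hξ : Measurable ξ) (hξWM : ∀ᵐ u ∂μ, ξ u ∈ Icc W M) (hv : v < W) :
    Integrable (fun u => v * ξ u / (ξ u - v) ^ 2) μ :=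
  integrable_comp_of_continuousOn_Icc (g := fun x => v * x / (x - v) ^ 2) (by fun_prop)
    (continuousOn_div_sub_pow (by fun_prop) hv 2) hξ hξWM

lemma integrable_kernel_deriv (hξ : Measurable ξ) (hξWM : ∀ᵐ u ∂μ, ξ u ∈ Icc W M) (hw : w < W) :
    Integrable (fun u => ξ u * (ξ u + w) / (ξ u - w) ^ 3) μ :=
  integrable_comp_of_continuousOn_Icc (g := fun x => x * (x + w) / (x - w) ^ 3) (by fun_prop)
    (continuousOn_div_sub_pow (by fun_prop) hw 3) hξ hξWM

lemma integrable_tangent_gap (hξ : Measurable ξ) (hξWM : ∀ᵐ u ∂μ, ξ u ∈ Icc W M) (hv : v < W)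
    (hw : w < W) :
    Integrable (fun u => v * ξ u / (ξ u - v) ^ 2 -
      (w * ξ u / (ξ u - w) ^ 2 + (v - w) * (ξ u * (ξ u + w) / (ξ u - w) ^ 3))) μ :=
  (integrable_kernel hξ hξWM hv).sub
    ((integrable_kernel hξ hξWM hw).add ((integrable_kernel_deriv hξ hξWM hw).const_mul _))

lemma integral_tangent_gap (hξ : Measurable ξ) (hξWM : ∀ᵐ u ∂μ, ξ u ∈ Icc W M) (hv : v < W)
    (hw : w < W) (hθ : ∫ u, ξ u * (ξ u + w) / (ξ u - w) ^ 3 ∂μ = θ) :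
    legendreObjective μ ξ θ w - legendreObjective μ ξ θ v =
      ∫ u, (v * ξ u / (ξ u - v) ^ 2 -
        (w * ξ u / (ξ u - w) ^ 2 + (v - w) * (ξ u * (ξ u + w) / (ξ u - w) ^ 3))) ∂μ := by
  have hD := integrable_kernel hξ hξWM hw
  have hB := (integrable_kernel_deriv hξ hξWM hw).const_mul (v - w)
  have hTangent : Integrable (fun u => w * ξ u / (ξ u - w) ^ 2 +
      (v - w) * (ξ u * (ξ u + w) / (ξ u - w) ^ 3)) μ := hD.add hB
  rw [legendreObjective, legendreObjective, integral_sub (integrable_kernel hξ hξWM hv) hTangent,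
    integral_add hD hB, integral_const_mul, hθ]
  ring

lemma legendreObjective_le (hξ : Measurable ξ) (hξWM : ∀ᵐ u ∂μ, ξ u ∈ Icc W M)
    (hv : v ∈ Ico 0 W) (hw : w < W) (hθ : ∫ u, ξ u * (ξ u + w) / (ξ u - w) ^ 3 ∂μ = θ) :
    legendreObjective μ ξ θ v ≤ legendreObjective μ ξ θ w := by
  have hgap := integral_tangent_gap hξ hξWM hv.2 hw hθ
  have : 0 ≤ legendreObjective μ ξ θ w - legendreObjective μ ξ θ v :=
    hgap ▸ integral_nonneg_of_ae (tangent_gap_nonneg_ae hξWM hv hw)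
  linarith

lemma eq_of_legendreObjective_eq [NeZero μ] (hξ : Measurable ξ)
    (hξWM : ∀ᵐ u ∂μ, ξ u ∈ Icc W M) (hv : v ∈ Ico 0 W) (hw : w < W)
    (hθ : ∫ u, ξ u * (ξ u + w) / (ξ u - w) ^ 3 ∂μ = θ)
    (heq : legendreObjective μ ξ θ v = legendreObjective μ ξ θ w) : v = w := by
  by_contra hne
  have hgap_zero := integral_tangent_gap hξ hξWM hv.2 hw hθ
  rw [heq, sub_self, eq_comm, integral_eq_zero_iff_of_nonneg_ae
    (tangent_gap_nonneg_ae hξWM hv hw) (integrable_tangent_gap hξ hξWM hv.2 hw)] at hgap_zero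
  have hgap_pos : ∀ᵐ u ∂μ, 0 < v * ξ u / (ξ u - v) ^ 2 -
      (w * ξ u / (ξ u - w) ^ 2 + (v - w) * (ξ u * (ξ u + w) / (ξ u - w) ^ 3)) :=
    hξWM.mono fun _ hu =>
      sub_pos.mpr (kernel_tangent_lt_of_ne hv.1 (hv.2.trans_le hu.1) (hw.trans_le hu.1) hne)
  obtain ⟨u, hu_zero, hu_pos⟩ := (hgap_zero.and hgap_pos).exists
  exact hu_pos.ne' hu_zero

end TangentGap

theorem legendre_dual_limit_shape_general
    (χ m M θ W 𝔴 𝔥 : ℝ) (hχ : 0 < χ)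
    (ξ : ℝ → ℝ) (hmeas : Measurable ξ)
    (hlb : ∀ u, m ≤ ξ u) (hub : ∀ u, ξ u ≤ M)
    (hW : W = essInf ξ (volume.restrict (Set.Ioo 0 χ)))
    (h𝔴mem : 𝔴 ∈ Set.Ioo 0 W)
    (hcrit : (∫ u in (0:ℝ)..χ, ξ u * (ξ u + 𝔴) / (ξ u - 𝔴) ^ 3) = θ)
    (h𝔥 : 𝔥 = θ * 𝔴 - ∫ u in (0:ℝ)..χ, ξ u * 𝔴 / (ξ u - 𝔴) ^ 2) :
    (∀ v ∈ Set.Ico (0:ℝ) W,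
      θ * v - (∫ u in (0:ℝ)..χ, v * ξ u / (ξ u - v) ^ 2) ≤ 𝔥) ∧
    (∀ v ∈ Set.Ico (0:ℝ) W,
      θ * v - (∫ u in (0:ℝ)..χ, v * ξ u / (ξ u - v) ^ 2) = 𝔥 → v = 𝔴) := by
  set μ := volume.restrict (Ioo 0 χ)
  have : NeZero μ := ⟨by simpa [μ, Measure.restrict_eq_zero] using hχ⟩
  have hξWM : ∀ᵐ u ∂μ, ξ u ∈ Icc W M :=
    (hW ▸ ae_essInf_le (Filter.isBoundedUnder_of ⟨m, hlb⟩)).mono fun u hu => ⟨hu, hub u⟩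
  have hinterval (f : ℝ → ℝ) : ∫ u in (0:ℝ)..χ, f u = ∫ u, f u ∂μ := by
    rw [intervalIntegral.integral_of_le hχ.le, integral_Ioc_eq_integral_Ioo]
  have hΦ (v : ℝ) : θ * v - ∫ u in (0:ℝ)..χ, v * ξ u / (ξ u - v) ^ 2 =
      legendreObjective μ ξ θ v := by
    rw [hinterval, legendreObjective]
  have h𝔥Φ : 𝔥 = legendreObjective μ ξ θ 𝔴 := by
    simp_rw [h𝔥, mul_comm (ξ _) 𝔴, hΦ]
  rw [hinterval] at hcrit
  refine ⟨fun v hv => ?_, fun v hv heq => ?_⟩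
  · rw [hΦ, h𝔥Φ]
    exact legendreObjective_le hmeas hξWM hv h𝔴mem.2 hcrit
  · rw [hΦ, h𝔥Φ] at heq
    exact eq_of_legendreObjective_eq hmeas hξWM hv h𝔴mem.2 hcrit heq

/-- Legendre dual representation of the limit shape: for `(θ,χ)` in the curved part,
`𝔥(θ,χ) = θ𝔴° − ∫₀^χ ξ(u)𝔴°/(ξ(u)−𝔴°)² du`, where `𝔴°` is the critical point, equals
the maximum over `v ∈ [0, W°)` of `v ↦ θv − ∫₀^χ v·ξ(u)/(ξ(u)−v)² du`, and the
maximum is attained uniquely at `v = 𝔴°`. -/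
theorem legendre_dual_limit_shape
    (χ m M θ W 𝔴 𝔥 : ℝ) (hχ : 0 < χ) (hm : 0 < m)
    (ξ : ℝ → ℝ) (hmeas : Measurable ξ)
    (hlb : ∀ u, m ≤ ξ u) (hub : ∀ u, ξ u ≤ M)
    (hW : W = essInf ξ (volume.restrict (Set.Ioo 0 χ)))
    (hcurved : (∫ u in (0:ℝ)..χ, 1 / ξ u) < θ)
    (h𝔴mem : 𝔴 ∈ Set.Ioo 0 W)
    (hcrit : (∫ u in (0:ℝ)..χ, ξ u * (ξ u + 𝔴) / (ξ u - 𝔴) ^ 3) = θ)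
    (h𝔥 : 𝔥 = θ * 𝔴 - ∫ u in (0:ℝ)..χ, ξ u * 𝔴 / (ξ u - 𝔴) ^ 2) :
    (∀ v ∈ Set.Ico (0:ℝ) W,
      θ * v - (∫ u in (0:ℝ)..χ, v * ξ u / (ξ u - v) ^ 2) ≤ 𝔥) ∧
    (∀ v ∈ Set.Ico (0:ℝ) W,
      θ * v - (∫ u in (0:ℝ)..χ, v * ξ u / (ξ u - v) ^ 2) = 𝔥 → v = 𝔴) :=
  legendre_dual_limit_shape_general χ m M θ W 𝔴 𝔥 hχ ξ hmeas hlb hub hW h𝔴mem hcrit h𝔥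
end

section
/- Outside the curved part the Legendre dual is nonpositive: if θ ≤ ∫₀^χ du/ξ(u), then for all v ∈ [0, W°), θv − ∫₀^χ v·ξ(u)/(ξ(u)−v)² du ≤ 0. -/
/-!
Since `W° ≤ ξ` almost everywhere, every `v ∈ [0, W°)` satisfies `0 ≤ v < ξ u` for a.e. `u`, and
then `0 ≤ ξ u - v ≤ ξ u` gives the pointwise bound `v / ξ u ≤ v ξ u / (ξ u - v)²`. Integrating,
`θ v ≤ v ∫ 1/ξ ≤ ∫ v ξ / (ξ - v)²`. Integrability comes from `x ↦ x / (x - v)²` being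
decreasing on `(v, ∞)`, so the integrand is bounded by `v W° / (W° - v)²`.
-/

open MeasureTheory Set

section Pointwise

variable {K : Type*} [Field K] [LinearOrder K] [IsStrictOrderedRing K] {v w x : K}

theorem div_le_mul_div_sub_sq (hv : 0 ≤ v) (hvx : v < x) :
    v / x ≤ v * x / (x - v) ^ 2 := by
  have hx : 0 < x := hv.trans_lt hvx
  rw [div_le_div_iff₀ hx (by nlinarith)]
  nlinarith [mul_nonneg hv (mul_nonneg hv (sub_pos.2 hvx).le)]

theorem div_sub_sq_le_of_le (hv : 0 ≤ v) (hvw : v < w) (hwx : w ≤ x) :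
    x / (x - v) ^ 2 ≤ w / (w - v) ^ 2 := by
  rw [div_le_div_iff₀ (by nlinarith) (by nlinarith)]
  nlinarith [mul_nonneg (sub_nonneg.2 hwx) (sub_nonneg.2 (mul_le_mul hvw.le (hvw.le.trans hwx) hv
    (hv.trans hvw.le)))]

end Pointwise

section Integral

variable {a b v w : ℝ} {f : ℝ → ℝ}

theorem ae_restrict_Icc_essInf_le (hf : ∃ m, ∀ u, m ≤ f u) :
    ∀ᵐ u ∂volume.restrict (Icc a b), essInf f (volume.restrict (Ioo a b)) ≤ f u := by
  rw [Measure.restrict_congr_set Ioo_ae_eq_Icc.symm]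
  obtain ⟨m, hm⟩ := hf
  exact ae_essInf_le (Filter.isBoundedUnder_of ⟨m, hm⟩)

theorem intervalIntegrable_mul_div_sub_sq
    (hab : a ≤ b) (hf : Measurable f) (hv : 0 ≤ v) (hvw : v < w)
    (hfw : ∀ᵐ u ∂volume.restrict (Icc a b), w ≤ f u) :
    IntervalIntegrable (fun u => v * f u / (f u - v) ^ 2) volume a b := by
  rw [intervalIntegrable_iff_integrableOn_Icc_of_le hab]
  refine (integrable_const (v * (w / (w - v) ^ 2))).mono'
    ((measurable_const.mul hf).div ((hf.sub_const v).pow_const 2)).aestronglyMeasurable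
    (hfw.mono fun u hu => ?_)
  have hfu : 0 ≤ f u := hv.trans (hvw.le.trans hu)
  rw [Real.norm_of_nonneg (by positivity), mul_div_assoc]
  exact mul_le_mul_of_nonneg_left (div_sub_sq_le_of_le hv hvw hu) hv

theorem integral_one_div_mul_le_integral_mul_div_sub_sq
    (hab : a ≤ b) (hf : Measurable f) (hv : 0 ≤ v) (hvw : v < w)
    (hfw : ∀ᵐ u ∂volume.restrict (Icc a b), w ≤ f u) :
    (∫ u in a..b, 1 / f u) * v ≤ ∫ u in a..b, v * f u / (f u - v) ^ 2 := by
  have hlow : ∀ᵐ u ∂volume.restrict (Icc a b), v / f u ≤ v * f u / (f u - v) ^ 2 :=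
    hfw.mono fun u hu => div_le_mul_div_sub_sq hv (hvw.trans_le hu)
  have hint := intervalIntegrable_mul_div_sub_sq hab hf hv hvw hfw
  have hint' : IntervalIntegrable (fun u => v / f u) volume a b := by
    rw [intervalIntegrable_iff_integrableOn_Icc_of_le hab] at hint ⊢
    refine hint.mono' (hf.const_div v).aestronglyMeasurable <|
      (hfw.and hlow).mono fun u ⟨hu, hle⟩ => ?_
    rwa [Real.norm_of_nonneg (div_nonneg hv (hv.trans (hvw.le.trans hu)))]
  rw [← intervalIntegral.integral_mul_const]
  simp only [one_div_mul_eq_div]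
  exact intervalIntegral.integral_mono_ae_restrict hab hint' hint hlow

end Integral

theorem legendre_dual_nonpositive_outside_curved_part_general
    (χ m θ : ℝ) (hχ : 0 < χ)
    (ξ : ℝ → ℝ) (hmeas : Measurable ξ)
    (hlb : ∀ u, m ≤ ξ u)
    (hθ : θ ≤ ∫ u in (0:ℝ)..χ, 1 / ξ u) :
    ∀ v ∈ Set.Ico (0:ℝ) (essInf ξ (volume.restrict (Set.Ioo 0 χ))),
      θ * v - (∫ u in (0:ℝ)..χ, v * ξ u / (ξ u - v) ^ 2) ≤ 0 := by
  rintro v ⟨hv, hvW⟩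
  have key := integral_one_div_mul_le_integral_mul_div_sub_sq hχ.le hmeas hv hvW
    (ae_restrict_Icc_essInf_le ⟨m, hlb⟩)
  linarith [mul_le_mul_of_nonneg_right hθ hv]

/-- Outside the curved part the Legendre dual is nonpositive: if
`θ ≤ ∫₀^χ du/ξ(u)`, then for all `v ∈ [0, W°)`,
`θv − ∫₀^χ v·ξ(u)/(ξ(u)−v)² du ≤ 0`. -/
theorem legendre_dual_nonpositive_outside_curved_part
    (χ m M θ : ℝ) (hχ : 0 < χ) (hm : 0 < m)
    (ξ : ℝ → ℝ) (hmeas : Measurable ξ)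
    (hlb : ∀ u, m ≤ ξ u) (hub : ∀ u, ξ u ≤ M)
    (hθ : θ ≤ ∫ u in (0:ℝ)..χ, 1 / ξ u) :
    ∀ v ∈ Set.Ico (0:ℝ) (essInf ξ (volume.restrict (Set.Ioo 0 χ))),
      θ * v - (∫ u in (0:ℝ)..χ, v * ξ u / (ξ u - v) ^ 2) ≤ 0 :=
  legendre_dual_nonpositive_outside_curved_part_general χ m θ hχ ξ hmeas hlb hθ
end

section
/- Steep ascent on the circle (pointwise form): fix 𝔴 > 0 and γ ≥ 0, and define S(z) = (𝔴+γ)·( 1/(𝔴+γ−z) − z(2𝔴+γ)/γ³ + 2𝔴² log z / γ³ ) for γ > 0. Then for 0 < φ < π, the derivative d/dφ Re S(𝔴 e^{iφ}) equals 16𝔴²(γ+𝔴)²(γ+2𝔴) sin³(φ/2) cos(φ/2) (γ² + 𝔴²(1−cos φ) + γ𝔴(1−cos φ)) / (γ³(γ²+2𝔴²+2γ𝔴−2𝔴(γ+𝔴)cos φ)²), which is strictly positive. -/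
/-!
On the circle `|z| = 𝔴` the term `Re log z = log 𝔴` is constant and
`Re (a - z)⁻¹ = (a - 𝔴 cos φ) / Q` with `a = 𝔴 + γ` and
`Q = |a - z|² = γ² + 2a𝔴(1 - cos φ)`, so `Re S` is a rational function of `cos φ`.
Since `a² - 𝔴² = γ(2𝔴 + γ)`, its derivative is `a𝔴(2𝔴 + γ) sin φ (1/γ³ - γ/Q²)`, and
`Q² - γ⁴ = (Q - γ²)(Q + γ²)` contributes the factor `1 - cos φ = 2 sin²(φ/2)`.
-/

open Complex

noncomputable def steepAscentS (𝔴 γ : ℝ) (z : ℂ) : ℂ :=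
  ((𝔴 : ℂ) + γ) * ((𝔴 + γ - z)⁻¹ - z * (2 * 𝔴 + γ) / (γ : ℂ) ^ 3
    + 2 * (𝔴 : ℂ) ^ 2 * log z / (γ : ℂ) ^ 3)

noncomputable def steepAscentDeriv (𝔴 γ t : ℝ) : ℝ :=
  16 * 𝔴 ^ 2 * (γ + 𝔴) ^ 2 * (γ + 2 * 𝔴) * Real.sin (t / 2) ^ 3 * Real.cos (t / 2)
    * (γ ^ 2 + 𝔴 ^ 2 * (1 - Real.cos t) + γ * 𝔴 * (1 - Real.cos t))
    / (γ ^ 3 * (γ ^ 2 + 2 * 𝔴 ^ 2 + 2 * γ * 𝔴 - 2 * 𝔴 * (γ + 𝔴) * Real.cos t) ^ 2)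

lemma normSq_sub_mul_exp_I (a r t : ℝ) :
    normSq (a - r * exp (I * t)) = (a - r) ^ 2 + 2 * a * r * (1 - Real.cos t) := by
  rw [mul_comm I, exp_mul_I, ← ofReal_cos, ← ofReal_sin]
  simp only [normSq_apply, sub_re, sub_im, mul_re, mul_im, add_re, add_im, ofReal_re, ofReal_im,
    I_re, I_im]
  linear_combination r ^ 2 * Real.sin_sq_add_cos_sq t

lemma re_inv_sub_mul_exp_I (a r t : ℝ) :
    ((a - r * exp (I * t))⁻¹).re =
      (a - r * Real.cos t) / ((a - r) ^ 2 + 2 * a * r * (1 - Real.cos t)) := by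
  rw [inv_re, normSq_sub_mul_exp_I, mul_comm I, exp_mul_I, ← ofReal_cos, ← ofReal_sin]
  simp [cos_ofReal_re]

lemma re_log_ofReal_mul_exp_I (r t : ℝ) : (log (r * exp (I * t))).re = Real.log r := by
  rw [log_re, norm_mul, norm_exp_I_mul_ofReal, mul_one, norm_real, Real.norm_eq_abs, Real.log_abs]

lemma re_steepAscentS_circle (𝔴 γ t : ℝ) :
    (steepAscentS 𝔴 γ (𝔴 * exp (I * t))).re =
      (𝔴 + γ) * ((𝔴 + γ - 𝔴 * Real.cos t) / (γ ^ 2 + 2 * (𝔴 + γ) * 𝔴 * (1 - Real.cos t))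
        - 𝔴 * Real.cos t * (2 * 𝔴 + γ) / γ ^ 3 + 2 * 𝔴 ^ 2 * Real.log 𝔴 / γ ^ 3) := by
  unfold steepAscentS
  rw [← ofReal_add, ← ofReal_pow, re_ofReal_mul, add_re, sub_re, div_ofReal_re, div_ofReal_re]
  simp only [← ofReal_ofNat, ← ofReal_mul, ← ofReal_pow, ← ofReal_add, re_ofReal_mul,
    re_mul_ofReal, re_inv_sub_mul_exp_I, re_log_ofReal_mul_exp_I]
  rw [mul_comm I, exp_ofReal_mul_I_re, add_sub_cancel_left]

lemma sq_add_two_mul_one_sub_cos_pos {a b c : ℝ} (hc : c ≠ 0) (hab : 0 ≤ a * b) (t : ℝ) :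
    0 < c ^ 2 + 2 * a * b * (1 - Real.cos t) := by
  have hcos : 0 ≤ 1 - Real.cos t := sub_nonneg.2 (Real.cos_le_one t)
  have hc2 : 0 < c ^ 2 := by positivity
  nlinarith [mul_nonneg hab hcos]

lemma hasDerivAt_div_one_sub_cos {a r c : ℝ} (t : ℝ)
    (hQ : c ^ 2 + 2 * a * r * (1 - Real.cos t) ≠ 0) :
    HasDerivAt (fun s => (a - r * Real.cos s) / (c ^ 2 + 2 * a * r * (1 - Real.cos s)))
      (r * Real.sin t * (c ^ 2 + 2 * a * r * (1 - Real.cos t) - 2 * a * (a - r * Real.cos t))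
        / (c ^ 2 + 2 * a * r * (1 - Real.cos t)) ^ 2) t := by
  have hnum : HasDerivAt (fun s => a - r * Real.cos s) (r * Real.sin t) t := by
    simpa using ((Real.hasDerivAt_cos t).const_mul r).const_sub a
  have hden : HasDerivAt (fun s => c ^ 2 + 2 * a * r * (1 - Real.cos s))
      (2 * a * r * Real.sin t) t := by
    simpa using (((Real.hasDerivAt_cos t).const_sub 1).const_mul (2 * a * r)).const_add (c ^ 2)
  refine (hnum.div hden hQ).congr_deriv ?_
  ring

lemma sin_mul_one_sub_cos (t : ℝ) :
    Real.sin t * (1 - Real.cos t) = 4 * Real.sin (t / 2) ^ 3 * Real.cos (t / 2) := by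
  conv_lhs => rw [← mul_div_cancel₀ t two_ne_zero, Real.sin_two_mul, Real.cos_two_mul]
  linear_combination -4 * Real.sin (t / 2) * Real.cos (t / 2) * Real.sin_sq_add_cos_sq (t / 2)

lemma steepAscentDeriv_eq (𝔴 γ t : ℝ) :
    steepAscentDeriv 𝔴 γ t =
      16 * 𝔴 ^ 2 * (γ + 𝔴) ^ 2 * (γ + 2 * 𝔴) * Real.sin (t / 2) ^ 3 * Real.cos (t / 2)
        * (γ ^ 2 + (𝔴 + γ) * 𝔴 * (1 - Real.cos t))
        / (γ ^ 3 * (γ ^ 2 + 2 * (𝔴 + γ) * 𝔴 * (1 - Real.cos t)) ^ 2) := by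
  rw [steepAscentDeriv]
  ring

lemma hasDerivAt_re_steepAscentS_circle {𝔴 γ : ℝ} (h𝔴 : 0 ≤ 𝔴) (hγ : 0 < γ) (t : ℝ) :
    HasDerivAt (fun s : ℝ => (steepAscentS 𝔴 γ (𝔴 * exp (I * s))).re)
      (steepAscentDeriv 𝔴 γ t) t := by
  simp only [re_steepAscentS_circle]
  have hQ := sq_add_two_mul_one_sub_cos_pos hγ.ne' (by positivity : 0 ≤ (𝔴 + γ) * 𝔴) t
  have hlinear :=
    (((Real.hasDerivAt_cos t).const_mul 𝔴).mul_const (2 * 𝔴 + γ)).div_const (γ ^ 3)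
  refine ((((hasDerivAt_div_one_sub_cos t hQ.ne').sub hlinear).add_const
    (2 * 𝔴 ^ 2 * Real.log 𝔴 / γ ^ 3)).const_mul (𝔴 + γ)).congr_deriv ?_
  have hsin_cube :
      16 * 𝔴 ^ 2 * (γ + 𝔴) ^ 2 * (γ + 2 * 𝔴) * Real.sin (t / 2) ^ 3 * Real.cos (t / 2) =
        4 * 𝔴 ^ 2 * (γ + 𝔴) ^ 2 * (γ + 2 * 𝔴) * (Real.sin t * (1 - Real.cos t)) := by
    rw [sin_mul_one_sub_cos]; ring
  rw [steepAscentDeriv_eq, hsin_cube]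
  generalize hQdef : γ ^ 2 + 2 * (𝔴 + γ) * 𝔴 * (1 - Real.cos t) = Q at hQ ⊢
  field_simp
  subst hQdef
  ring

lemma steepAscentDeriv_pos {𝔴 γ t : ℝ} (h𝔴 : 0 < 𝔴) (hγ : 0 < γ) (ht₀ : 0 < t)
    (htπ : t < Real.pi) :
    0 < steepAscentDeriv 𝔴 γ t := by
  have hsin : 0 < Real.sin (t / 2) := Real.sin_pos_of_pos_of_lt_pi (by linarith) (by linarith)
  have hcos : 0 < Real.cos (t / 2) := Real.cos_pos_of_mem_Ioo ⟨by linarith, by linarith⟩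
  have hu : 0 ≤ 1 - Real.cos t := sub_nonneg.2 (Real.cos_le_one t)
  rw [steepAscentDeriv_eq]
  generalize 1 - Real.cos t = u at hu ⊢
  positivity

/-- Steep ascent on the circle (pointwise form): for `𝔴, γ > 0` and
`S(z) = (𝔴+γ)(1/(𝔴+γ−z) − z(2𝔴+γ)/γ³ + 2𝔴² log z/γ³)`, the derivative in `φ` of
`Re S(𝔴 e^{iφ})` for `0 < φ < π` is given by the stated closed form, which is
strictly positive. -/
theorem steep_ascent_circle_derivative
    (𝔴 γ : ℝ) (h𝔴 : 0 < 𝔴) (hγ : 0 < γ)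
    (φ : ℝ) (hφ0 : 0 < φ) (hφπ : φ < Real.pi)
    (D : ℝ)
    (hD : D = 16 * 𝔴 ^ 2 * (γ + 𝔴) ^ 2 * (γ + 2 * 𝔴)
        * Real.sin (φ / 2) ^ 3 * Real.cos (φ / 2)
        * (γ ^ 2 + 𝔴 ^ 2 * (1 - Real.cos φ) + γ * 𝔴 * (1 - Real.cos φ))
        / (γ ^ 3
            * (γ ^ 2 + 2 * 𝔴 ^ 2 + 2 * γ * 𝔴 - 2 * 𝔴 * (γ + 𝔴) * Real.cos φ) ^ 2)) :
    HasDerivAt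
      (fun t : ℝ =>
        (((𝔴 : ℂ) + (γ : ℂ)) *
          (((𝔴 : ℂ) + (γ : ℂ) - (𝔴 : ℂ) * Complex.exp (Complex.I * (t : ℂ)))⁻¹
            - (𝔴 : ℂ) * Complex.exp (Complex.I * (t : ℂ)) * (2 * (𝔴 : ℂ) + (γ : ℂ)) / (γ : ℂ) ^ 3
            + 2 * (𝔴 : ℂ) ^ 2 * Complex.log ((𝔴 : ℂ) * Complex.exp (Complex.I * (t : ℂ))) / (γ : ℂ) ^ 3)).re)
      D φ ∧ 0 < D := by
  subst hD
  exact ⟨hasDerivAt_re_steepAscentS_circle h𝔴.le hγ φ, steepAscentDeriv_pos h𝔴 hγ hφ0 hφπ⟩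
end

section
/- Stationarity of the gB product measure for the homogeneous discrete dynamics: for parameters a, β > 0, ν ∈ [0,1) and c ∈ (0,1), let π(0) = (1−c)/(1−cν) and π(k) = c^k(1−c)(1−ν)/(1−cν) for k ≥ 1, and let u = acβ/(1+acβ). Then the single-site balance equations π(k+1)P(k+1→k) + π(k−1)P(k−1→k) + π(k)P(k→k) = π(k) hold for all k ≥ 0, where P(k+1→k) = (aβ/(1+aβ))(1−u); P(0→1) = u(1−ν)/(1+aβ); P(k−1→k) = u/(1+aβ) for k ≥ 2; P(0→0) = 1 − u(1−ν)/(1+aβ); P(k→k) = aβu/(1+aβ) + (1−u)/(1+aβ) for k ≥ 1; and terms with k−1 < 0 are absent. -/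
/-!
The dynamics is a birth–death chain on `ℕ`, so stationarity follows from detailed balance
`π(k+1) P(k+1→k) = π(k) P(k→k+1)` on every edge: the holding probability at `k` is one minus
the two jump probabilities, so the two edges at `k` add up to `π(k)`. Detailed balance comes
from `π(k+1) = c π(k)` for `k ≥ 1`, `π(1) = c(1-ν) π(0)`, and `c · aβ(1-u) = u`, which is
`x (1 - x/(1+x)) = x/(1+x)` for `x = acβ`.
-/

noncomputable def gBWeight (c ν : ℝ) : ℕ → ℝ
  | 0 => (1 - c) / (1 - c * ν)
  | k + 1 => c ^ (k + 1) * (1 - c) * (1 - ν) / (1 - c * ν)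

section gBWeight

variable {c ν : ℝ}

theorem gBWeight_nonneg (hc0 : 0 ≤ c) (hc1 : c ≤ 1) (hν : ν ≤ 1) (k : ℕ) :
    0 ≤ gBWeight c ν k := by
  have hcν : 0 ≤ 1 - c * ν := by linarith [mul_nonneg hc0 (sub_nonneg.2 hν)]
  cases k with
  | zero => exact div_nonneg (by linarith) hcν
  | succ k =>
    exact div_nonneg
      (mul_nonneg (mul_nonneg (pow_nonneg hc0 _) (sub_nonneg.2 hc1)) (sub_nonneg.2 hν)) hcν

theorem hasSum_gBWeight (hc : |c| < 1) (hcν : 1 - c * ν ≠ 0) : HasSum (gBWeight c ν) 1 := by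
  have hc1 : 1 - c ≠ 0 := by linarith [le_abs_self c]
  have htail : HasSum (fun k => gBWeight c ν (k + 1)) (c * (1 - ν) / (1 - c * ν)) := by
    have hgeom :=
      (hasSum_geometric_of_abs_lt_one hc).mul_left (c * (1 - c) * (1 - ν) / (1 - c * ν))
    rw [show c * (1 - c) * (1 - ν) / (1 - c * ν) * (1 - c)⁻¹ = c * (1 - ν) / (1 - c * ν) by
      field_simp] at hgeom
    refine hgeom.congr_fun fun k => ?_
    simp only [gBWeight]
    ring
  have hsum := (hasSum_nat_add_iff 1).mp htail
  rwa [Finset.sum_range_one, show c * (1 - ν) / (1 - c * ν) + gBWeight c ν 0 = 1 by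
    simp only [gBWeight]; field_simp; ring] at hsum

theorem gBWeight_one : gBWeight c ν 1 = c * (1 - ν) * gBWeight c ν 0 := by
  simp only [gBWeight]
  ring

theorem gBWeight_add_two (k : ℕ) : gBWeight c ν (k + 2) = c * gBWeight c ν (k + 1) := by
  simp only [gBWeight]
  ring

end gBWeight

theorem balance_of_detailed_balance {x y z p q p' q' : ℝ}
    (hxy : y * q' = x * p') (hyz : z * q = y * p) :
    z * q + x * p' + y * (1 - p - q') = y := by
  rw [hyz, ← hxy]
  ring

theorem mul_one_sub_eq_of_eq_div {x u : ℝ} (hx : 1 + x ≠ 0) (hu : u = x / (1 + x)) :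
    x * (1 - u) = u := by
  subst hu
  field_simp
  ring

theorem holding_eq_one_sub_jumps {x u : ℝ} (hx : 1 + x ≠ 0) :
    x * u / (1 + x) + (1 - u) / (1 + x) = 1 - u / (1 + x) - x / (1 + x) * (1 - u) := by
  field_simp
  ring

theorem gB_product_measure_stationary_general
    (a β ν c : ℝ) (ha : 0 < a) (hβ : 0 < β) (hν1 : ν < 1)
    (hc0 : 0 < c) (hc1 : c < 1)
    (π : ℕ → ℝ)
    (hπ0 : π 0 = (1 - c) / (1 - c * ν))
    (hπ : ∀ k : ℕ, 1 ≤ k → π k = c ^ k * (1 - c) * (1 - ν) / (1 - c * ν))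
    (u : ℝ) (hu : u = a * c * β / (1 + a * c * β)) :
    (∀ k, 0 ≤ π k) ∧ (∑' k : ℕ, π k) = 1 ∧
    (π 1 * (a * β / (1 + a * β) * (1 - u))
      + π 0 * (1 - u * (1 - ν) / (1 + a * β)) = π 0) ∧
    (π 2 * (a * β / (1 + a * β) * (1 - u))
      + π 0 * (u * (1 - ν) / (1 + a * β))
      + π 1 * (a * β * u / (1 + a * β) + (1 - u) / (1 + a * β)) = π 1) ∧
    (∀ k : ℕ, 2 ≤ k →
      π (k + 1) * (a * β / (1 + a * β) * (1 - u))
        + π (k - 1) * (u / (1 + a * β))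
        + π k * (a * β * u / (1 + a * β) + (1 - u) / (1 + a * β)) = π k) := by
  obtain rfl : π = gBWeight c ν := funext fun
    | 0 => hπ0
    | k + 1 => hπ (k + 1) k.succ_pos
  have hD : 1 + a * β ≠ 0 := by positivity
  have hdown : c * (a * β / (1 + a * β) * (1 - u)) = u / (1 + a * β) := by
    linear_combination mul_one_sub_eq_of_eq_div (by positivity) hu / (1 + a * β)
  have hdetailed₀ : gBWeight c ν 1 * (a * β / (1 + a * β) * (1 - u))
      = gBWeight c ν 0 * (u * (1 - ν) / (1 + a * β)) := by
    rw [gBWeight_one]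
    linear_combination (1 - ν) * gBWeight c ν 0 * hdown
  have hdetailed (k : ℕ) : gBWeight c ν (k + 2) * (a * β / (1 + a * β) * (1 - u))
      = gBWeight c ν (k + 1) * (u / (1 + a * β)) := by
    rw [gBWeight_add_two]
    linear_combination gBWeight c ν (k + 1) * hdown
  refine ⟨gBWeight_nonneg hc0.le hc1.le hν1.le,
    (hasSum_gBWeight (abs_lt.mpr ⟨by linarith, hc1⟩) (by nlinarith)).tsum_eq,
    by linear_combination hdetailed₀, ?_, ?_⟩
  · rw [holding_eq_one_sub_jumps hD]
    exact balance_of_detailed_balance hdetailed₀ (hdetailed 0)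
  · intro k hk
    obtain ⟨m, rfl⟩ := Nat.exists_eq_add_of_le' hk
    rw [holding_eq_one_sub_jumps hD]
    exact balance_of_detailed_balance (hdetailed m) (hdetailed (m + 1))

/-- Stationarity of the gB product measure for the homogeneous discrete dynamics:
`π` is a probability distribution on `ℤ_{≥0}`, and with `u = acβ/(1+acβ)` the
single-site balance equations hold for all `k ≥ 0`. -/
theorem gB_product_measure_stationary
    (a β ν c : ℝ) (ha : 0 < a) (hβ : 0 < β) (hν0 : 0 ≤ ν) (hν1 : ν < 1)
    (hc0 : 0 < c) (hc1 : c < 1)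
    (π : ℕ → ℝ)
    (hπ0 : π 0 = (1 - c) / (1 - c * ν))
    (hπ : ∀ k : ℕ, 1 ≤ k → π k = c ^ k * (1 - c) * (1 - ν) / (1 - c * ν))
    (u : ℝ) (hu : u = a * c * β / (1 + a * c * β)) :
    (∀ k, 0 ≤ π k) ∧ (∑' k : ℕ, π k) = 1 ∧
    (π 1 * (a * β / (1 + a * β) * (1 - u))
      + π 0 * (1 - u * (1 - ν) / (1 + a * β)) = π 0) ∧
    (π 2 * (a * β / (1 + a * β) * (1 - u))
      + π 0 * (u * (1 - ν) / (1 + a * β))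
      + π 1 * (a * β * u / (1 + a * β) + (1 - u) / (1 + a * β)) = π 1) ∧
    (∀ k : ℕ, 2 ≤ k →
      π (k + 1) * (a * β / (1 + a * β) * (1 - u))
        + π (k - 1) * (u / (1 + a * β))
        + π k * (a * β * u / (1 + a * β) + (1 - u) / (1 + a * β)) = π k) :=
  gB_product_measure_stationary_general a β ν c ha hβ hν1 hc0 hc1 π hπ0 hπ u hu
end

section
/- The limit shape satisfies the hydrodynamic PDE: suppose ξ is continuous at χ, 𝔴°(θ,χ) ∈ (0, ξ(χ)) solves ∫₀^χ ξ(u)(ξ(u)+𝔴°)/(ξ(u)−𝔴°)³ du = θ, and 𝔥(θ,χ) = θ𝔴° − ∫₀^χ ξ(u)𝔴°/(ξ(u)−𝔴°)² du. Then the partial derivatives satisfy ∂𝔥/∂θ = 𝔴° and ∂𝔥/∂χ = −ξ(χ)·𝔴° / (ξ(χ)−𝔴°)², so that 𝔥_χ = −ξ(χ)·𝔥_θ / (ξ(χ)−𝔥_θ)². -/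
/-!
Write `K(w, x) = x w / (x - w)²`, so that `𝔥 = Ψ(θ, χ, 𝔴)` with
`Ψ(θ, χ, w) = θ w - ∫₀^χ K(w, ξ u) du`, and `∂_w K(w, x) = x (x + w) / (x - w)³`. The defining
equation of `𝔴` says exactly that `∂_w Ψ = 0` at `w = 𝔴`, so in the chain rule the derivatives of
`𝔴` drop out (an envelope argument): `𝔥_θ = ∂_θ Ψ = 𝔴` and `𝔥_χ = ∂_χ Ψ = -K(𝔴, ξ χ)`.
Since `ξ` takes values in `[m, M]` and `𝔴 < m`, `K` and `∂_w K` are continuous on a compact set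
containing all relevant `(w, ξ u)`: this gives differentiation under the integral sign by
dominated convergence, and, through uniform continuity, the derivative of
`χ ↦ ∫_{χ₀}^χ K(𝔴(θ₀, χ), ξ u) du` at `χ₀`, for which continuity of `𝔴` suffices.
-/

open MeasureTheory Filter Topology Set

theorem hasDerivAt_integral_of_tendstoUniformly {F : ℝ → ℝ → ℝ} {f : ℝ → ℝ} {c : ℝ}
    (hF : TendstoUniformly F f (𝓝 c))
    (hF_int : ∀ᶠ χ in 𝓝 c, IntervalIntegrable (F χ) volume c χ)
    (hf_int : ∀ᶠ χ in 𝓝 c, IntervalIntegrable f volume c χ)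
    (hf_meas : StronglyMeasurableAtFilter f (𝓝 c)) (hf : ContinuousAt f c) :
    HasDerivAt (fun χ => ∫ u in c..χ, F χ u) (f c) c := by
  have herr : HasDerivAt (fun χ => ∫ u in c..χ, (F χ u - f u)) 0 c := by
    refine hasDerivAt_iff_isLittleO.2 (Asymptotics.isLittleO_iff.2 fun ε hε => ?_)
    filter_upwards [Metric.tendstoUniformly_iff.1 hF ε hε] with χ hχ
    have hbound : ∀ u ∈ uIoc c χ, ‖F χ u - f u‖ ≤ ε := fun u _ => by
      simpa [dist_comm, Real.dist_eq] using (hχ u).le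
    simpa [mul_comm] using intervalIntegral.norm_integral_le_of_norm_le_const hbound
  have hsum :=
    (intervalIntegral.integral_hasDerivAt_right IntervalIntegrable.refl hf_meas hf).add herr
  rw [add_zero] at hsum
  refine hsum.congr_of_eventuallyEq ?_
  filter_upwards [hF_int, hf_int] with χ hFχ hfχ
  simp only [Pi.add_apply, ← intervalIntegral.integral_add hfχ (hFχ.sub hfχ), add_sub_cancel]

theorem intervalIntegrable_comp_of_isCompact {f ξ : ℝ → ℝ} {s : Set ℝ} (hs : IsCompact s)
    (hf : ContinuousOn f s) (hf_meas : Measurable f) (hξ : Measurable ξ) (hξs : ∀ u, ξ u ∈ s)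
    (a b : ℝ) : IntervalIntegrable (fun u => f (ξ u)) volume a b := by
  obtain ⟨C, hC⟩ := hs.exists_bound_of_continuousOn hf
  rw [intervalIntegrable_iff]
  exact Measure.integrableOn_of_bounded measure_Ioc_lt_top.ne
    (hf_meas.comp hξ).aestronglyMeasurable (ae_of_all _ fun u => hC _ (hξs u))

namespace LimitShape

/-- The integrand of `𝔥`, with the parameter `w` first and `x = ξ u` second. -/
noncomputable def kernel (w x : ℝ) : ℝ := x * w / (x - w) ^ 2

noncomputable def kernelDeriv (w x : ℝ) : ℝ := x * (x + w) / (x - w) ^ 3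

theorem hasDerivAt_kernel {w x : ℝ} (h : w ≠ x) :
    HasDerivAt (fun w => kernel w x) (kernelDeriv w x) w := by
  have hxw : x - w ≠ 0 := sub_ne_zero.2 h.symm
  refine (((hasDerivAt_id' w).const_mul x).div (((hasDerivAt_id' w).const_sub x).fun_pow 2)
    (pow_ne_zero 2 hxw)).congr_deriv ?_
  unfold kernelDeriv
  field_simp
  ring

theorem continuousOn_kernel : ContinuousOn (Function.uncurry kernel) {p | p.1 < p.2} := by
  intro p hp
  have hp : p.2 - p.1 ≠ 0 := (sub_pos.2 hp).ne'
  unfold Function.uncurry kernel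
  fun_prop (disch := exact pow_ne_zero _ hp)

theorem continuousAt_kernel {w x : ℝ} (h : w < x) : ContinuousAt (kernel w) x :=
  (continuousOn_kernel.continuousAt ((isOpen_lt continuous_fst continuous_snd).mem_nhds h)).comp
    (by fun_prop : ContinuousAt (fun x => (w, x)) x)

theorem continuousOn_kernelDeriv :
    ContinuousOn (Function.uncurry kernelDeriv) {p | p.1 < p.2} := by
  intro p hp
  have hp : p.2 - p.1 ≠ 0 := (sub_pos.2 hp).ne'
  unfold Function.uncurry kernelDeriv
  fun_prop (disch := exact pow_ne_zero _ hp)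

theorem measurable_kernel (w : ℝ) : Measurable (kernel w) := by
  unfold kernel; fun_prop

theorem measurable_kernelDeriv (w : ℝ) : Measurable (kernelDeriv w) := by
  unfold kernelDeriv; fun_prop

theorem exists_Icc_mem_nhds_prod_Icc_subset {w₀ m : ℝ} (hw₀ : w₀ < m) (M : ℝ) :
    ∃ a b, Icc a b ∈ 𝓝 w₀ ∧ Icc a b ×ˢ Icc m M ⊆ {p : ℝ × ℝ | p.1 < p.2} :=
  ⟨w₀ - 1, (w₀ + m) / 2, Icc_mem_nhds (by linarith) (by linarith),
    fun _ hp => hp.1.2.trans_lt ((by linarith : (w₀ + m) / 2 < m).trans_le hp.2.1)⟩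

section

variable {ξ : ℝ → ℝ} {m M w₀ : ℝ}

theorem intervalIntegrable_kernel {w : ℝ} (hξ : Measurable ξ) (hξs : ∀ u, ξ u ∈ Icc m M)
    (hw : w < m) (a b : ℝ) : IntervalIntegrable (fun u => kernel w (ξ u)) volume a b :=
  intervalIntegrable_comp_of_isCompact isCompact_Icc
    (fun _ hx => (continuousAt_kernel (hw.trans_le hx.1)).continuousWithinAt)
    (measurable_kernel w) hξ hξs a b

theorem hasDerivAt_integral_kernel (hξ : Measurable ξ) (hξs : ∀ u, ξ u ∈ Icc m M)
    (hw₀ : w₀ < m) (a b : ℝ) :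
    HasDerivAt (fun w => ∫ u in a..b, kernel w (ξ u)) (∫ u in a..b, kernelDeriv w₀ (ξ u)) w₀ := by
  obtain ⟨a', b', hU, hK⟩ := exists_Icc_mem_nhds_prod_Icc_subset hw₀ M
  obtain ⟨C, hC⟩ := (isCompact_Icc.prod isCompact_Icc).exists_bound_of_continuousOn
    (continuousOn_kernelDeriv.mono hK)
  exact (intervalIntegral.hasDerivAt_integral_of_dominated_loc_of_deriv_le (bound := fun _ => C)
    hU (Eventually.of_forall fun w => ((measurable_kernel w).comp hξ).aestronglyMeasurable)
    (intervalIntegrable_kernel hξ hξs hw₀ a b)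
    ((measurable_kernelDeriv w₀).comp hξ).aestronglyMeasurable
    (ae_of_all _ fun u _ w hw => hC (w, ξ u) ⟨hw, hξs u⟩) intervalIntegrable_const
    (ae_of_all _ fun u _ w hw => hasDerivAt_kernel (hK ⟨hw, hξs u⟩).ne)).2

theorem tendstoUniformly_kernel (hξs : ∀ u, ξ u ∈ Icc m M) (hw₀ : w₀ < m) :
    TendstoUniformly (fun w u => kernel w (ξ u)) (fun u => kernel w₀ (ξ u)) (𝓝 w₀) := by
  obtain ⟨a, b, hU, hK⟩ := exists_Icc_mem_nhds_prod_Icc_subset hw₀ M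
  have hunif := UniformContinuousOn.tendstoUniformlyOn (F := kernel)
    ((isCompact_Icc.prod isCompact_Icc).uniformContinuousOn_of_continuous
      (continuousOn_kernel.mono hK)) (mem_of_mem_nhds hU)
  rw [nhdsWithin_eq_nhds.2 hU] at hunif
  have hcomp := hunif.comp ξ
  rwa [preimage_eq_univ_iff.2 (range_subset_iff.2 hξs), tendstoUniformlyOn_univ] at hcomp

theorem hasDerivAt_integral_kernel_comp {φ : ℝ → ℝ} {c : ℝ} (hξ : Measurable ξ)
    (hξs : ∀ u, ξ u ∈ Icc m M) (hξc : ContinuousAt ξ c) (hφ : ContinuousAt φ c)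
    (hφc : φ c < m) :
    HasDerivAt (fun χ => ∫ u in c..χ, kernel (φ χ) (ξ u)) (kernel (φ c) (ξ c)) c := by
  refine hasDerivAt_integral_of_tendstoUniformly (f := fun u => kernel (φ c) (ξ u)) ?_
    ((hφ.eventually (eventually_lt_nhds hφc)).mono fun χ hχ =>
      intervalIntegrable_kernel hξ hξs hχ c χ)
    (Eventually.of_forall fun χ => intervalIntegrable_kernel hξ hξs hφc c χ)
    ((measurable_kernel _).comp hξ).stronglyMeasurable.stronglyMeasurableAtFilter
    ((continuousAt_kernel (hφc.trans_le (hξs c).1)).comp hξc)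
  exact Metric.tendstoUniformly_iff.2 fun ε hε =>
    hφ.eventually (Metric.tendstoUniformly_iff.1 (tendstoUniformly_kernel hξs hφc) ε hε)

end

end LimitShape

theorem limit_shape_hydrodynamic_pde_general
    (m M θ₀ χ₀ : ℝ)
    (ξ : ℝ → ℝ) (hmeas : Measurable ξ)
    (hlb : ∀ u, m ≤ ξ u) (hub : ∀ u, ξ u ≤ M)
    (hcont : ContinuousAt ξ χ₀)
    (𝔴 𝔥 : ℝ → ℝ → ℝ)
    (U : Set (ℝ × ℝ)) (hU : IsOpen U) (hmemU : (θ₀, χ₀) ∈ U)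
    (h𝔴mem : ∀ p ∈ U, 0 < 𝔴 p.1 p.2 ∧ 𝔴 p.1 p.2 < m)
    (hcrit : ∀ p ∈ U,
      (∫ u in (0:ℝ)..p.2, ξ u * (ξ u + 𝔴 p.1 p.2) / (ξ u - 𝔴 p.1 p.2) ^ 3) = p.1)
    (h𝔥 : ∀ p ∈ U,
      𝔥 p.1 p.2 = p.1 * 𝔴 p.1 p.2
        - ∫ u in (0:ℝ)..p.2, ξ u * 𝔴 p.1 p.2 / (ξ u - 𝔴 p.1 p.2) ^ 2)
    (wθ wχ : ℝ)
    (hdθ : HasDerivAt (fun θ => 𝔴 θ χ₀) wθ θ₀)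
    (hdχ : HasDerivAt (fun χ => 𝔴 θ₀ χ) wχ χ₀) :
    HasDerivAt (fun θ => 𝔥 θ χ₀) (𝔴 θ₀ χ₀) θ₀ ∧
    HasDerivAt (fun χ => 𝔥 θ₀ χ) (-(ξ χ₀ * 𝔴 θ₀ χ₀) / (ξ χ₀ - 𝔴 θ₀ χ₀) ^ 2) χ₀ ∧
    (∀ dθ dχ : ℝ, HasDerivAt (fun θ => 𝔥 θ χ₀) dθ θ₀ →
      HasDerivAt (fun χ => 𝔥 θ₀ χ) dχ χ₀ →
      dχ = -(ξ χ₀ * dθ) / (ξ χ₀ - dθ) ^ 2) := by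
  open LimitShape in
  have hξs : ∀ u, ξ u ∈ Icc m M := fun u => ⟨hlb u, hub u⟩
  have hw₀ : 𝔴 θ₀ χ₀ < m := (h𝔴mem _ hmemU).2
  -- The critical-point equation: `∂_w Ψ = 0` at `𝔴 θ₀ χ₀`, which cancels the `∂𝔴` terms below.
  have hΦ : HasDerivAt (fun w => ∫ u in (0:ℝ)..χ₀, kernel w (ξ u)) θ₀ (𝔴 θ₀ χ₀) :=
    (hasDerivAt_integral_kernel hmeas hξs hw₀ 0 χ₀).congr_deriv (hcrit _ hmemU)
  have hUθ : ∀ᶠ θ in 𝓝 θ₀, (θ, χ₀) ∈ U :=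
    (continuousAt_id.prodMk continuousAt_const).eventually (hU.mem_nhds hmemU)
  have hUχ : ∀ᶠ χ in 𝓝 χ₀, (θ₀, χ) ∈ U :=
    (continuousAt_const.prodMk continuousAt_id).eventually (hU.mem_nhds hmemU)
  have hθ : HasDerivAt (fun θ => 𝔥 θ χ₀) (𝔴 θ₀ χ₀) θ₀ := by
    have h := ((hasDerivAt_id' θ₀).mul hdθ).sub (hΦ.comp θ₀ hdθ)
    rw [one_mul, add_sub_cancel_right] at h
    exact h.congr_of_eventuallyEq (hUθ.mono fun θ hθ => h𝔥 _ hθ)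
  have hχ : HasDerivAt (fun χ => 𝔥 θ₀ χ) (-kernel (𝔴 θ₀ χ₀) (ξ χ₀)) χ₀ := by
    have h := ((hdχ.const_mul θ₀).sub (hΦ.comp χ₀ hdχ)).sub
      (hasDerivAt_integral_kernel_comp hmeas hξs hcont hdχ.continuousAt hw₀)
    rw [sub_self, zero_sub] at h
    refine h.congr_of_eventuallyEq (hUχ.mono fun χ hχ => ?_)
    have hwχ : 𝔴 θ₀ χ < m := (h𝔴mem _ hχ).2
    have h𝔥χ : 𝔥 θ₀ χ = θ₀ * 𝔴 θ₀ χ - ∫ u in (0:ℝ)..χ, kernel (𝔴 θ₀ χ) (ξ u) := h𝔥 _ hχ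
    dsimp only [Pi.sub_apply, Function.comp_apply]
    rw [h𝔥χ, ← intervalIntegral.integral_add_adjacent_intervals
      (intervalIntegrable_kernel hmeas hξs hwχ 0 χ₀) (intervalIntegrable_kernel hmeas hξs hwχ χ₀ χ)]
    ring
  have hkernel : -kernel (𝔴 θ₀ χ₀) (ξ χ₀) = -(ξ χ₀ * 𝔴 θ₀ χ₀) / (ξ χ₀ - 𝔴 θ₀ χ₀) ^ 2 :=
    (neg_div _ _).symm
  refine ⟨hθ, hkernel ▸ hχ, fun dθ dχ hdθ' hdχ' => ?_⟩
  rw [hdθ'.unique hθ, hdχ'.unique hχ, hkernel]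

/-- The limit shape satisfies the hydrodynamic PDE: if `ξ` is continuous at `χ₀`,
`𝔴(θ,χ) ∈ (0, ξ(χ))` solves the critical point equation near `(θ₀,χ₀)`, and
`𝔥(θ,χ) = θ𝔴 − ∫₀^χ ξ(u)𝔴/(ξ(u)−𝔴)² du`, then `∂𝔥/∂θ = 𝔴`,
`∂𝔥/∂χ = −ξ(χ)𝔴/(ξ(χ)−𝔴)²`, and hence `𝔥_χ = −ξ(χ)𝔥_θ/(ξ(χ)−𝔥_θ)²`. -/
theorem limit_shape_hydrodynamic_pde
    (m M θ₀ χ₀ : ℝ) (hχ₀ : 0 < χ₀) (hm : 0 < m)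
    (ξ : ℝ → ℝ) (hmeas : Measurable ξ)
    (hlb : ∀ u, m ≤ ξ u) (hub : ∀ u, ξ u ≤ M)
    (hcont : ContinuousAt ξ χ₀)
    (𝔴 𝔥 : ℝ → ℝ → ℝ)
    (U : Set (ℝ × ℝ)) (hU : IsOpen U) (hmemU : (θ₀, χ₀) ∈ U)
    (hUpos : ∀ p ∈ U, 0 < p.2)
    (h𝔴mem : ∀ p ∈ U, 0 < 𝔴 p.1 p.2 ∧ 𝔴 p.1 p.2 < m)
    (hcrit : ∀ p ∈ U,
      (∫ u in (0:ℝ)..p.2, ξ u * (ξ u + 𝔴 p.1 p.2) / (ξ u - 𝔴 p.1 p.2) ^ 3) = p.1)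
    (h𝔥 : ∀ p ∈ U,
      𝔥 p.1 p.2 = p.1 * 𝔴 p.1 p.2
        - ∫ u in (0:ℝ)..p.2, ξ u * 𝔴 p.1 p.2 / (ξ u - 𝔴 p.1 p.2) ^ 2)
    (wθ wχ : ℝ)
    (hdθ : HasDerivAt (fun θ => 𝔴 θ χ₀) wθ θ₀)
    (hdχ : HasDerivAt (fun χ => 𝔴 θ₀ χ) wχ χ₀) :
    HasDerivAt (fun θ => 𝔥 θ χ₀) (𝔴 θ₀ χ₀) θ₀ ∧
    HasDerivAt (fun χ => 𝔥 θ₀ χ) (-(ξ χ₀ * 𝔴 θ₀ χ₀) / (ξ χ₀ - 𝔴 θ₀ χ₀) ^ 2) χ₀ ∧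
    (∀ dθ dχ : ℝ, HasDerivAt (fun θ => 𝔥 θ χ₀) dθ θ₀ →
      HasDerivAt (fun χ => 𝔥 θ₀ χ) dχ χ₀ →
      dχ = -(ξ χ₀ * dθ) / (ξ χ₀ - dθ) ^ 2) :=
  limit_shape_hydrodynamic_pde_general m M θ₀ χ₀ ξ hmeas hlb hub hcont 𝔴 𝔥 U hU hmemU h𝔴mem hcrit h𝔥
    wθ wχ hdθ hdχ
end

section
/- Expansion of the double critical point near the traffic jam: the unique root 𝔴°(ε) in (0, 1/2) of the polynomial −11+20ε+(103−20ε)v−30(13+2ε)v²+20(38+5ε)v³−40(20+ε)v⁴+432v⁵−96v⁶ satisfies 𝔴°(ε) = 1/2 − (1/2)ε^{1/4} − (1/5)ε^{1/2} + (7/100)ε^{3/4} + (191/2000)ε + O(ε^{5/4}) as ε → 0⁺. -/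
/-!
Write `v = 1/2 - s` and `d = ε^{1/4}`: the equation becomes `s⁴ A(s) = d⁴ B(s)` with
`A(s) = 80 + 144 s + 96 s²` and `B(s) = 5 + 25 s + 30 s² - 20 s³ - 40 s⁴`, both bounded above and
below on `(0, 1/2)`, so the root satisfies `s ≍ d`. The truncated series
`T(d) = d/2 + d²/5 - 7d³/100 - 191d⁴/2000` leaves a residual of size `O(d⁸)`, while on the region
`s ≍ d` the polynomial increases at rate `≳ d³`; hence `|s - T(d)| = O(d⁵) = O(ε^{5/4})`.
-/

open Finset

theorem abs_sum_mul_pow_le {n : ℕ} (c : Fin n → ℝ) {x r : ℝ} (hx : 0 ≤ x) (hxr : x ≤ r) :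
    |∑ i, c i * x ^ (i : ℕ)| ≤ ∑ i, |c i| * r ^ (i : ℕ) :=
  (abs_sum_le_sum_abs _ _).trans <| sum_le_sum fun i _ => by
    rw [abs_mul, abs_pow, abs_of_nonneg hx]
    exact mul_le_mul_of_nonneg_left (pow_le_pow_left₀ hx hxr _) (abs_nonneg _)

/-- With `d = ε^{1/4}`, `P_ε(1/2 - s) = -localPoly d s`. -/
noncomputable def localPoly (d s : ℝ) : ℝ :=
  s ^ 4 * (80 + 144 * s + 96 * s ^ 2) - d ^ 4 * (5 + 25 * s + 30 * s ^ 2 - 20 * s ^ 3 - 40 * s ^ 4)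

noncomputable def puiseuxApprox (d : ℝ) : ℝ :=
  d / 2 + d ^ 2 / 5 - 7 * d ^ 3 / 100 - 191 * d ^ 4 / 2000

noncomputable def residualCoeff : Fin 17 → ℝ :=
  ![-271/500, -711/250, -3039/800, -307903/200000, 7155429/5000000, 19565727/10000000,
    107594861/200000000, -7102563/15625000, -76534854019/200000000000,
    -10341507223/400000000000, 161228183267/2000000000000, 555259132889/20000000000000,
    -12022504673959/2000000000000000, -5067934646559/1000000000000000,
    -1640954524113/5000000000000000, 16014278822913/50000000000000000,
    145653678817923/2000000000000000000]

/-- The coefficients of `puiseuxApprox` are exactly those that make the terms of order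
`d⁴, …, d⁷` cancel. -/
theorem localPoly_puiseuxApprox (d : ℝ) :
    localPoly d (puiseuxApprox d) = d ^ 8 * ∑ i, residualCoeff i * d ^ (i : ℕ) := by
  simp [Fin.sum_univ_succ, residualCoeff, localPoly, puiseuxApprox]
  ring

theorem abs_localPoly_puiseuxApprox_le {d : ℝ} (hd0 : 0 ≤ d) (hd : d ≤ 1 / 3) :
    |localPoly d (puiseuxApprox d)| ≤ 2 * d ^ 8 := by
  have hsum : ∑ i, |residualCoeff i| * (1 / 3 : ℝ) ^ (i : ℕ) ≤ 2 := by
    simp [Fin.sum_univ_succ, residualCoeff]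
    norm_num [abs_div]
  rw [localPoly_puiseuxApprox, abs_mul, abs_of_nonneg (by positivity), mul_comm]
  gcongr
  exact (abs_sum_mul_pow_le residualCoeff hd0 hd).trans hsum

theorem localPoly_sub_localPoly (d s t : ℝ) :
    localPoly d t - localPoly d s = (t - s) *
      (80 * (t ^ 3 + t ^ 2 * s + t * s ^ 2 + s ^ 3)
        + 144 * (t ^ 4 + t ^ 3 * s + t ^ 2 * s ^ 2 + t * s ^ 3 + s ^ 4)
        + 96 * (t ^ 5 + t ^ 4 * s + t ^ 3 * s ^ 2 + t ^ 2 * s ^ 3 + t * s ^ 4 + s ^ 5)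
        - d ^ 4 * (25 + 30 * (t + s) - 20 * (t ^ 2 + t * s + s ^ 2)
          - 40 * (t ^ 3 + t ^ 2 * s + t * s ^ 2 + s ^ 3))) := by
  unfold localPoly
  ring

/-- The quartic part grows at rate at least `320 (2d/5)³ > 20 d³`, the `d⁴` part at rate at most
`40 d⁴ ≤ 40 d³ / 3`. -/
theorem mul_sub_le_localPoly_sub {d s t : ℝ} (hd0 : 0 ≤ d) (hd : d ≤ 1 / 3)
    (hs : 2 * d / 5 ≤ s) (hst : s ≤ t) (ht : t ≤ 1 / 4) :
    7 * d ^ 3 * (t - s) ≤ localPoly d t - localPoly d s := by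
  rw [localPoly_sub_localPoly, mul_comm]
  refine mul_le_mul_of_nonneg_left ?_ (sub_nonneg.2 hst)
  have hs0 : 0 ≤ s := le_trans (by positivity) hs
  have ht0 : 0 ≤ t := hs0.trans hst
  have hcubic : 4 * (2 * d / 5) ^ 3 ≤ t ^ 3 + t ^ 2 * s + t * s ^ 2 + s ^ 3 := by
    have hdt : 2 * d / 5 ≤ t := hs.trans hst
    have : (2 * d / 5) ^ 3 + (2 * d / 5) ^ 2 * (2 * d / 5) + (2 * d / 5) * (2 * d / 5) ^ 2
        + (2 * d / 5) ^ 3 ≤ t ^ 3 + t ^ 2 * s + t * s ^ 2 + s ^ 3 := by gcongr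
    linarith
  have hB : 25 + 30 * (t + s) - 20 * (t ^ 2 + t * s + s ^ 2)
      - 40 * (t ^ 3 + t ^ 2 * s + t * s ^ 2 + s ^ 3) ≤ 40 := by
    have : 0 ≤ t ^ 2 + t * s + s ^ 2 := by positivity
    have : 0 ≤ t ^ 3 + t ^ 2 * s + t * s ^ 2 + s ^ 3 := by positivity
    linarith
  have hd4 : d ^ 4 * 40 ≤ 40 / 3 * d ^ 3 := by
    have := pow_nonneg hd0 3
    nlinarith
  have : 0 ≤ t ^ 4 + t ^ 3 * s + t ^ 2 * s ^ 2 + t * s ^ 3 + s ^ 4 := by positivity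
  have : 0 ≤ t ^ 5 + t ^ 4 * s + t ^ 3 * s ^ 2 + t ^ 2 * s ^ 3 + t * s ^ 4 + s ^ 5 := by positivity
  nlinarith [mul_le_mul_of_nonneg_left hB (pow_nonneg hd0 4)]

theorem mul_abs_sub_le_abs_localPoly_sub {d s t : ℝ} (hd0 : 0 ≤ d) (hd : d ≤ 1 / 3)
    (hs : 2 * d / 5 ≤ s) (hs' : s ≤ 1 / 4) (ht : 2 * d / 5 ≤ t) (ht' : t ≤ 1 / 4) :
    7 * d ^ 3 * |t - s| ≤ |localPoly d t - localPoly d s| := by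
  rcases le_total s t with hst | hts
  · rw [abs_of_nonneg (sub_nonneg.2 hst)]
    exact (mul_sub_le_localPoly_sub hd0 hd hs hst ht').trans (le_abs_self _)
  · rw [abs_sub_comm, abs_of_nonneg (sub_nonneg.2 hts), abs_sub_comm]
    exact (mul_sub_le_localPoly_sub hd0 hd ht hts hs').trans (le_abs_self _)

/-- From `s⁴ A(s) = d⁴ B(s)` with `80 ≤ A(s) ≤ 176` and `5 ≤ B(s) ≤ 20`. -/
theorem localPoly_root_bounds {d s : ℝ} (hd0 : 0 ≤ d) (hs0 : 0 < s) (hs1 : s < 1 / 2)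
    (h : localPoly d s = 0) : 2 * d / 5 ≤ s ∧ s ≤ 3 * d / 4 := by
  unfold localPoly at h
  have h12 : 0 ≤ 1 - 2 * s := by linarith
  have hA : 80 ≤ 80 + 144 * s + 96 * s ^ 2 := by nlinarith
  have hA' : 80 + 144 * s + 96 * s ^ 2 ≤ 176 := by nlinarith
  have hB : 5 ≤ 5 + 25 * s + 30 * s ^ 2 - 20 * s ^ 3 - 40 * s ^ 4 := by
    nlinarith [mul_nonneg (pow_nonneg hs0.le 3) h12,
      mul_nonneg hs0.le (mul_nonneg h12 (by linarith : (0:ℝ) ≤ 1 + 2 * s))]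
  have hB' : 5 + 25 * s + 30 * s ^ 2 - 20 * s ^ 3 - 40 * s ^ 4 ≤ 20 := by
    nlinarith [mul_nonneg h12 (by nlinarith : (0:ℝ) ≤ 30 - 40 * s ^ 3 - 40 * s ^ 2 + 10 * s)]
  have hs4 := pow_pos hs0 4
  have hd4 := pow_nonneg hd0 4
  constructor
  · refine le_of_pow_le_pow_left₀ (n := 4) (by norm_num) hs0.le ?_
    nlinarith [mul_le_mul_of_nonneg_left hA' hs4.le, mul_le_mul_of_nonneg_left hB hd4]
  · refine le_of_pow_le_pow_left₀ (n := 4) (by norm_num) (by positivity) ?_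
    nlinarith [mul_le_mul_of_nonneg_left hA hs4.le, mul_le_mul_of_nonneg_left hB' hd4]

theorem puiseuxApprox_bounds {d : ℝ} (hd0 : 0 ≤ d) (hd : d ≤ 1 / 3) :
    2 * d / 5 ≤ puiseuxApprox d ∧ puiseuxApprox d ≤ 3 * d / 4 := by
  unfold puiseuxApprox
  have := pow_nonneg hd0 2
  have := pow_nonneg hd0 3
  constructor <;> nlinarith

theorem abs_sub_puiseuxApprox_le {d s : ℝ} (hd0 : 0 < d) (hd : d ≤ 1 / 3) (hs0 : 0 < s)
    (hs1 : s < 1 / 2) (h : localPoly d s = 0) : |s - puiseuxApprox d| ≤ d ^ 5 := by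
  obtain ⟨hs, hs'⟩ := localPoly_root_bounds hd0.le hs0 hs1 h
  obtain ⟨hT, hT'⟩ := puiseuxApprox_bounds hd0.le hd
  have key : 7 * d ^ 3 * |s - puiseuxApprox d| ≤ 2 * d ^ 8 := by
    calc 7 * d ^ 3 * |s - puiseuxApprox d|
        ≤ |localPoly d s - localPoly d (puiseuxApprox d)| :=
          mul_abs_sub_le_abs_localPoly_sub hd0.le hd hT (by linarith) hs (by linarith)
      _ ≤ 2 * d ^ 8 := by
          rw [h, zero_sub, abs_neg]
          exact abs_localPoly_puiseuxApprox_le hd0.le hd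
  have hd3 := pow_pos hd0 3
  nlinarith [abs_nonneg (s - puiseuxApprox d), pow_pos hd0 5]

/-- Puiseux expansion of the double critical point near the traffic jam: the
root `𝔴°(ε) ∈ (0, 1/2)` of the perturbed sixth-degree polynomial satisfies
`𝔴°(ε) = 1/2 − (1/2)ε^{1/4} − (1/5)ε^{1/2} + (7/100)ε^{3/4} + (191/2000)ε + O(ε^{5/4})`
as `ε → 0⁺`. -/
theorem double_critical_point_expansion
    (ε₀ : ℝ) (hε₀ : 0 < ε₀) (w : ℝ → ℝ)
    (hroot : ∀ ε : ℝ, 0 < ε → ε < ε₀ →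
      w ε ∈ Set.Ioo (0:ℝ) (1/2) ∧
      -11 + 20 * ε + (103 - 20 * ε) * w ε - 30 * (13 + 2 * ε) * (w ε) ^ 2
        + 20 * (38 + 5 * ε) * (w ε) ^ 3 - 40 * (20 + ε) * (w ε) ^ 4
        + 432 * (w ε) ^ 5 - 96 * (w ε) ^ 6 = 0) :
    ∃ C > 0, ∃ ε₁ > 0, ∀ ε : ℝ, 0 < ε → ε < ε₁ →
      |w ε - (1/2 - (1/2) * ε ^ ((1:ℝ)/4) - (1/5) * ε ^ ((1:ℝ)/2)
        + (7/100) * ε ^ ((3:ℝ)/4) + (191/2000) * ε)| ≤ C * ε ^ ((5:ℝ)/4) := by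
  refine ⟨1, one_pos, min ε₀ (1 / 81), lt_min hε₀ (by norm_num), fun ε hε hε₁ => ?_⟩
  obtain ⟨⟨hw0, hw1⟩, hP⟩ := hroot ε hε (hε₁.trans_le (min_le_left _ _))
  set d := ε ^ (1 / 4 : ℝ)
  have hpow (k : ℕ) : d ^ k = ε ^ (1 / 4 * k : ℝ) := (Real.rpow_mul_natCast hε.le _ _).symm
  have hd4 : d ^ 4 = ε := by rw [hpow]; norm_num
  have hd0 : 0 < d := by positivity
  have hd : d ≤ 1 / 3 := by
    refine le_of_pow_le_pow_left₀ (n := 4) (by norm_num) (by norm_num) ?_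
    linarith [hd4, hε₁.trans_le (min_le_right ε₀ (1 / 81))]
  have hlocal : localPoly d (1 / 2 - w ε) = 0 := by
    unfold localPoly
    rw [hd4]
    linear_combination -hP
  have h2 : ε ^ ((1:ℝ)/2) = d ^ 2 := by rw [hpow]; norm_num
  have h3 : ε ^ ((3:ℝ)/4) = d ^ 3 := by rw [hpow]; norm_num
  have h5 : ε ^ ((5:ℝ)/4) = d ^ 5 := by rw [hpow]; norm_num
  have hexpand : w ε - (1/2 - (1/2) * d - (1/5) * ε ^ ((1:ℝ)/2) + (7/100) * ε ^ ((3:ℝ)/4)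
      + (191/2000) * ε) = -(1 / 2 - w ε - puiseuxApprox d) := by
    rw [h2, h3, puiseuxApprox]
    linear_combination (191 / 2000) * hd4
  rw [hexpand, abs_neg, h5, one_mul]
  exact abs_sub_puiseuxApprox_le hd0 hd (by linarith) (by linarith) hlocal
end
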